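/- Let c, a, b ∈ V with ϑ_0(a) = ϑ_0(b) and ϑ_0(a) ≠ ϑ_0(c). Then there exists a symplectic F_2-linear bijection A : V → V such that ϑ_c(A u) = ϑ_c(u) and ϑ_a(A u) = ϑ_b(u) for all u ∈ V. (That is, the stabilizer in Sp(2m,2) of a quadratic form of one type acts transitively on the quadratic forms of the other type: R⁺ is transitive on Ω⁻ and R⁻ is transitive on Ω⁺.) -/

import Mathlib

open Finset

/-- The symplectic bilinear form `⟨u,v⟩ = ∑_{i<m} (u_i v_{m+i} + u_{m+i} v_i)` on `(F_2)^{2m}`. -/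
def symp (m : ℕ) (u v : Fin (2*m) → ZMod 2) : ZMod 2 :=
  ∑ i : Fin m, (u ⟨i.1, by omega⟩ * v ⟨m + i.1, by omega⟩ +
    u ⟨m + i.1, by omega⟩ * v ⟨i.1, by omega⟩)

/-- The quadratic form `ϑ_0(u) = ∑_{i<m} u_i u_{m+i}`. -/
def th0 (m : ℕ) (u : Fin (2*m) → ZMod 2) : ZMod 2 :=
  ∑ i : Fin m, u ⟨i.1, by omega⟩ * u ⟨m + i.1, by omega⟩

/-- The quadratic form `ϑ_a(u) = ϑ_0(u) + ⟨a,u⟩`. -/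
def th (m : ℕ) (a u : Fin (2*m) → ZMod 2) : ZMod 2 :=
  th0 m u + symp m a u

/-!
All the forms `ϑ_e` have the same polar form `⟨·,·⟩`, so an isometry `A` of `ϑ_c` is automatically
symplectic, and since `ϑ_a = ϑ_c + ⟨a + c, ·⟩` it carries `ϑ_a` to `ϑ_b` as soon as
`A (b + c) = a + c`. The hypotheses say exactly that `ϑ_c (a + c) = ϑ_c (b + c) = 1`, so it suffices
that the orthogonal group of a nondegenerate quadratic form over `𝔽₂` is transitive on the vectors
of value `1`. Two such vectors `v, w` with `⟨v, w⟩ = 1` are exchanged by the transvection along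
`v + w`. If `⟨v, w⟩ = 0`, nondegeneracy gives `x` with `⟨v, x⟩ = ⟨w, x⟩ = 1`: if `ϑ(x) = 1`, two
transvections carry `w` to `x` and `x` to `v`; if `ϑ(x) = 0`, the Eichler transformation
`u ↦ u + ⟨x, u⟩ y + ⟨y, u⟩ x` with `y = x + v + w` carries `w` to `v`.
-/

open QuadraticMap

theorem ZMod.eq_zero_or_eq_one (x : ZMod 2) : x = 0 ∨ x = 1 := by
  revert x; decide

theorem ZMod.add_eq_one_of_ne {x y : ZMod 2} (h : x ≠ y) : x + y = 1 := by
  revert x y; decide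

theorem LinearMap.exists_apply_eq_zero_and_apply_eq_one {V : Type*} [AddCommGroup V]
    [Module (ZMod 2) V] {f g : V →ₗ[ZMod 2] ZMod 2} (hg : g ≠ 0) (hfg : f ≠ g) :
    ∃ x, f x = 0 ∧ g x = 1 := by
  by_contra! H
  have hf : ∀ x, g x = 1 → f x = 1 := fun x hx =>
    (ZMod.eq_zero_or_eq_one _).resolve_left fun h => H x h hx
  obtain ⟨x₀, hx₀⟩ : ∃ x, g x = 1 := by
    by_contra! h
    exact hg (LinearMap.ext fun x => (ZMod.eq_zero_or_eq_one _).resolve_right (h x))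
  refine hfg (LinearMap.ext fun y => ?_)
  rcases ZMod.eq_zero_or_eq_one (g y) with hy | hy
  · have := hf (y + x₀) (by rw [map_add, hy, hx₀, zero_add])
    rw [map_add, hf x₀ hx₀] at this
    rw [hy, add_eq_right.mp this]
  · rw [hy, hf y hy]

namespace QuadraticMap

theorem IsometryEquiv.polar_map {R M₁ M₂ N : Type*} [CommRing R] [AddCommGroup M₁]
    [AddCommGroup M₂] [AddCommGroup N] [Module R M₁] [Module R M₂] [Module R N]
    {Q₁ : QuadraticMap R M₁ N} {Q₂ : QuadraticMap R M₂ N} (A : Q₁.IsometryEquiv Q₂)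
    (x y : M₁) :
    polar Q₂ (A x) (A y) = polar Q₁ x y := by
  simp only [polar, ← map_add, A.map_app]

section CharTwo

variable {R V : Type*} [CommRing R] [CharP R 2] [AddCommGroup V] [Module R V]
  (Q : QuadraticForm R V)

theorem polar_self_eq_zero_of_charTwo (x : V) : polar Q x x = 0 := by
  rw [polar_self, two_nsmul, CharTwo.add_self_eq_zero]

theorem map_add_polar_smul_of_map_eq_one {w : V} (hw : Q w = 1) (u : V) :
    Q (u + polar Q w u • w) = Q u := by
  rw [QuadraticMap.map_add Q, QuadraticMap.map_smul, polar_smul_right, hw, polar_comm Q u w,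
    smul_eq_mul, smul_eq_mul, mul_one, add_assoc, CharTwo.add_self_eq_zero, add_zero]

theorem map_add_polar_smul_add_polar_smul {p q : V} (hp : Q p = 0) (hq : Q q = 0)
    (hpq : polar Q p q = 0) (u : V) :
    Q (u + polar Q p u • q + polar Q q u • p) = Q u := by
  rw [QuadraticMap.map_add Q, QuadraticMap.map_add Q, QuadraticMap.map_smul,
    QuadraticMap.map_smul, hp, hq, polar_add_left, polar_smul_left, polar_smul_right,
    polar_smul_right, polar_smul_right, polar_comm Q q p, hpq, polar_comm Q u p, polar_comm Q u q]
  simp only [smul_eq_mul]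
  linear_combination CharTwo.add_self_eq_zero (polar Q p u * polar Q q u)

def transvection {w : V} (hw : Q w = 1) : Q.IsometryEquiv Q where
  toLinearEquiv := LinearEquiv.ofInvolutive (LinearMap.id + (polarBilin Q w).smulRight w)
    fun u => by
      simp only [LinearMap.add_apply, LinearMap.id_apply, LinearMap.smulRight_apply,
        polarBilin_apply_apply, polar_add_right, polar_smul_right, polar_self_eq_zero_of_charTwo,
        smul_zero, add_zero, add_assoc, ← add_smul, CharTwo.add_self_eq_zero, zero_smul]
  map_app' := by exact map_add_polar_smul_of_map_eq_one Q hw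

theorem transvection_apply {w : V} (hw : Q w = 1) (u : V) :
    transvection Q hw u = u + polar Q w u • w := rfl

def eichler {p q : V} (hp : Q p = 0) (hq : Q q = 0) (hpq : polar Q p q = 0) :
    Q.IsometryEquiv Q where
  toLinearEquiv := LinearEquiv.ofInvolutive
    (LinearMap.id + (polarBilin Q p).smulRight q + (polarBilin Q q).smulRight p)
    fun u => by
      have hqp : polar Q q p = 0 := by rw [polar_comm, hpq]
      simp only [LinearMap.add_apply, LinearMap.id_apply, LinearMap.smulRight_apply,
        polarBilin_apply_apply, polar_add_right, polar_smul_right, polar_self_eq_zero_of_charTwo,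
        hpq, hqp, smul_zero, add_zero]
      linear_combination (norm := module)
        (CharTwo.two_eq_zero (R := R)) • (polar Q p u • q + polar Q q u • p)
  map_app' := by exact map_add_polar_smul_add_polar_smul Q hp hq hpq

theorem eichler_apply {p q : V} (hp : Q p = 0) (hq : Q q = 0) (hpq : polar Q p q = 0) (u : V) :
    eichler Q hp hq hpq u = u + polar Q p u • q + polar Q q u • p := rfl

theorem exists_isometryEquiv_apply_eq_of_polar_eq_one {v w : V} (hv : Q v = 1) (hw : Q w = 1)
    (hvw : polar Q v w = 1) : ∃ A : Q.IsometryEquiv Q, A w = v := by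
  have h : Q (v + w) = 1 := by
    rw [QuadraticMap.map_add Q, hv, hw, hvw]
    linear_combination CharTwo.two_eq_zero (R := R)
  refine ⟨transvection Q h, ?_⟩
  rw [transvection_apply, polar_add_left, hvw, polar_self_eq_zero_of_charTwo, add_zero, one_smul]
  linear_combination (norm := module) (CharTwo.two_eq_zero (R := R)) • w

theorem exists_isometryEquiv_apply_eq_of_isotropic {v w x : V} (hv : Q v = 1) (hw : Q w = 1)
    (hvw : polar Q v w = 0) (hx : Q x = 0) (hvx : polar Q v x = 1) (hwx : polar Q w x = 1) :
    ∃ A : Q.IsometryEquiv Q, A w = v := by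
  have hq : Q (x + v + w) = 0 := by
    have hxv : polar Q x v = 1 := by rw [polar_comm, hvx]
    have hxw : polar Q x w = 1 := by rw [polar_comm, hwx]
    rw [QuadraticMap.map_add Q, QuadraticMap.map_add Q, polar_add_left, hv, hw, hx, hvw, hxv, hxw]
    linear_combination 2 * CharTwo.two_eq_zero (R := R)
  have hpq : polar Q x (x + v + w) = 0 := by
    rw [polar_add_right, polar_add_right, polar_self_eq_zero_of_charTwo, polar_comm Q x, hvx,
      polar_comm Q x, hwx]
    linear_combination CharTwo.two_eq_zero (R := R)
  refine ⟨eichler Q hx hq hpq, ?_⟩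
  rw [eichler_apply, polar_add_left, polar_add_left, polar_comm Q x, hwx, hvw,
    polar_self_eq_zero_of_charTwo, add_zero, one_smul]
  linear_combination (norm := module) (CharTwo.two_eq_zero (R := R)) • (w + x)

end CharTwo

section ZModTwo

variable {V : Type*} [AddCommGroup V] [Module (ZMod 2) V] {Q : QuadraticForm (ZMod 2) V}

theorem exists_isometryEquiv_apply_eq_of_polar_eq_zero (hQ : (polarBilin Q).SeparatingLeft)
    {v w : V} (hv : Q v = 1) (hw : Q w = 1) (hvw : polar Q v w = 0) :
    ∃ A : Q.IsometryEquiv Q, A w = v := by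
  have ne_zero {y : V} (hy : Q y = 1) : polarBilin Q y ≠ 0 := fun h => by
    rw [hQ y (fun z => by rw [h]; rfl), QuadraticMap.map_zero] at hy
    exact zero_ne_one hy
  obtain ⟨x, hx₀, hvx⟩ := LinearMap.exists_apply_eq_zero_and_apply_eq_one (ne_zero hv)
    (f := polarBilin Q (v + w)) (by rw [map_add, Ne, add_eq_left]; exact ne_zero hw)
  rw [polarBilin_apply_apply] at hvx
  have hwx : polar Q w x = 1 := by
    rw [map_add, LinearMap.add_apply, polarBilin_apply_apply, polarBilin_apply_apply, hvx] at hx₀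
    rw [eq_neg_of_add_eq_zero_right hx₀, ZMod.neg_eq_self_mod_two]
  rcases ZMod.eq_zero_or_eq_one (Q x) with hx | hx
  · exact exists_isometryEquiv_apply_eq_of_isotropic Q hv hw hvw hx hvx hwx
  · obtain ⟨A₁, hA₁⟩ :=
      exists_isometryEquiv_apply_eq_of_polar_eq_one Q hx hw (by rw [polar_comm, hwx])
    obtain ⟨A₂, hA₂⟩ := exists_isometryEquiv_apply_eq_of_polar_eq_one Q hv hx hvx
    exact ⟨A₁.trans A₂, show A₂ (A₁ w) = v by rw [hA₁, hA₂]⟩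

theorem exists_isometryEquiv_apply_eq (hQ : (polarBilin Q).SeparatingLeft) {v w : V}
    (hv : Q v = 1) (hw : Q w = 1) : ∃ A : Q.IsometryEquiv Q, A w = v := by
  rcases ZMod.eq_zero_or_eq_one (polar Q v w) with hvw | hvw
  · exact exists_isometryEquiv_apply_eq_of_polar_eq_zero hQ hv hw hvw
  · exact exists_isometryEquiv_apply_eq_of_polar_eq_one Q hv hw hvw

end ZModTwo

end QuadraticMap

section Symplectic

variable {m : ℕ}

theorem symp_add_left (u v w : Fin (2*m) → ZMod 2) :
    symp m (u + v) w = symp m u w + symp m v w := by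
  simp only [symp, Pi.add_apply, ← sum_add_distrib]
  exact sum_congr rfl fun _ _ => by ring

theorem symp_smul_left (s : ZMod 2) (u v : Fin (2*m) → ZMod 2) :
    symp m (s • u) v = s * symp m u v := by
  simp only [symp, Pi.smul_apply, smul_eq_mul, mul_sum]
  exact sum_congr rfl fun _ _ => by ring

theorem symp_comm (u v : Fin (2*m) → ZMod 2) : symp m u v = symp m v u :=
  sum_congr rfl fun _ _ => by ring

theorem th0_add (u v : Fin (2*m) → ZMod 2) :
    th0 m (u + v) = th0 m u + th0 m v + symp m u v := by
  simp only [th0, symp, Pi.add_apply, ← sum_add_distrib]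
  exact sum_congr rfl fun _ _ => by ring

theorem th_add (c u v : Fin (2*m) → ZMod 2) :
    th m c (u + v) = th m c u + th m c v + symp m u v := by
  rw [th, th, th, th0_add, symp_comm c, symp_add_left, symp_comm u c, symp_comm v c]
  ring

theorem th_smul (c : Fin (2*m) → ZMod 2) (s : ZMod 2) (u : Fin (2*m) → ZMod 2) :
    th m c (s • u) = (s * s) • th m c u := by
  rcases ZMod.eq_zero_or_eq_one s with rfl | rfl <;> simp [th, th0, symp]

theorem polar_th (c u v : Fin (2*m) → ZMod 2) : polar (th m c) u v = symp m u v := by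
  rw [polar, th_add]; ring

variable (m) in
def thForm (c : Fin (2*m) → ZMod 2) : QuadraticForm (ZMod 2) (Fin (2*m) → ZMod 2) :=
  QuadraticMap.ofPolar (th m c) (th_smul c)
    (fun x x' y => by simp only [polar_th, symp_add_left])
    (fun s x y => by simp only [polar_th, symp_smul_left, smul_eq_mul])

theorem thForm_apply (c u : Fin (2*m) → ZMod 2) : thForm m c u = th m c u := rfl

theorem polar_thForm (c u v : Fin (2*m) → ZMod 2) : polar (thForm m c) u v = symp m u v :=
  polar_th c u v

theorem symp_single_upper (u : Fin (2*m) → ZMod 2) (i : Fin m) :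
    symp m u (Pi.single ⟨m + i, by omega⟩ 1) = u ⟨i, by omega⟩ := by
  have hne (j : Fin m) : (j : ℕ) ≠ m + i := by omega
  simp [symp, Pi.single_apply, hne, Fin.val_inj]

theorem symp_single_lower (u : Fin (2*m) → ZMod 2) (i : Fin m) :
    symp m u (Pi.single ⟨i, by omega⟩ 1) = u ⟨m + i, by omega⟩ := by
  have hne (j : Fin m) : m + (j : ℕ) ≠ i := by omega
  simp [symp, Pi.single_apply, hne, Fin.val_inj]

theorem symp_self (u : Fin (2*m) → ZMod 2) : symp m u u = 0 := by
  rw [← polar_thForm 0]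
  exact polar_self_eq_zero_of_charTwo _ u

theorem separatingLeft_polarBilin_thForm (c : Fin (2*m) → ZMod 2) :
    (polarBilin (thForm m c)).SeparatingLeft := by
  intro u hu
  have h (v : Fin (2*m) → ZMod 2) : symp m u v = 0 := by rw [← polar_thForm c]; exact hu v
  funext j
  by_cases hj : (j : ℕ) < m
  · exact (symp_single_upper u ⟨j, hj⟩).symm.trans (h _)
  · obtain ⟨i, hi⟩ : ∃ i : Fin m, j = ⟨m + i, by omega⟩ :=
      ⟨⟨j - m, by omega⟩, Fin.ext (by simp only; omega)⟩
    rw [hi]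
    exact (symp_single_lower u i).symm.trans (h _)

theorem th_eq_th_add_symp (a c u : Fin (2*m) → ZMod 2) :
    th m a u = th m c u + symp m (a + c) u := by
  rw [th, th, symp_add_left]
  linear_combination -CharTwo.add_self_eq_zero (symp m c u)

theorem th_add_eq_th0_add_th0 (a c : Fin (2*m) → ZMod 2) :
    th m c (a + c) = th0 m a + th0 m c := by
  rw [th_add, th, th, symp_self, symp_comm c a]
  linear_combination CharTwo.add_self_eq_zero (symp m a c)

end Symplectic

theorem stmt_3_general (m : ℕ) (c a b : Fin (2*m) → ZMod 2)
    (h1 : th0 m a = th0 m b) (h2 : th0 m a ≠ th0 m c) :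
    ∃ A : (Fin (2*m) → ZMod 2) ≃ₗ[ZMod 2] (Fin (2*m) → ZMod 2),
      (∀ u v, symp m (A u) (A v) = symp m u v) ∧
      (∀ u, th m c (A u) = th m c u) ∧
      (∀ u, th m a (A u) = th m b u) := by
  have value_eq_one {e : Fin (2*m) → ZMod 2} (he : th0 m e ≠ th0 m c) :
      thForm m c (e + c) = 1 := by
    rw [thForm_apply, th_add_eq_th0_add_th0, ZMod.add_eq_one_of_ne he]
  obtain ⟨A, hA⟩ := exists_isometryEquiv_apply_eq (separatingLeft_polarBilin_thForm c)
    (value_eq_one h2) (value_eq_one (h1 ▸ h2))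
  have hA_symp (u v) : symp m (A u) (A v) = symp m u v := by
    rw [← polar_thForm c, ← polar_thForm c, A.polar_map]
  refine ⟨A.toLinearEquiv, hA_symp, A.map_app, fun u => ?_⟩
  change th m a (A u) = th m b u
  rw [th_eq_th_add_symp a c, th_eq_th_add_symp b c, ← hA, hA_symp, ← thForm_apply, A.map_app,
    thForm_apply]

/-- The stabilizer in `Sp(2m,2)` of a quadratic form of one type acts transitively on the
quadratic forms of the other type: if `ϑ_0(a) = ϑ_0(b)` and `ϑ_0(a) ≠ ϑ_0(c)`, then some
symplectic linear bijection fixes `ϑ_c` and carries `ϑ_a` to `ϑ_b`. -/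
theorem stmt_3 (m : ℕ) (hm : 1 ≤ m) (c a b : Fin (2*m) → ZMod 2)
    (h1 : th0 m a = th0 m b) (h2 : th0 m a ≠ th0 m c) :
    ∃ A : (Fin (2*m) → ZMod 2) ≃ₗ[ZMod 2] (Fin (2*m) → ZMod 2),
      (∀ u v, symp m (A u) (A v) = symp m u v) ∧
      (∀ u, th m c (A u) = th m c u) ∧
      (∀ u, th m a (A u) = th m b u) :=
  stmt_3_general m c a b h1 h2
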